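/- arXiv:2304.07211 — 3 statements merged into one kernel-verified Lean document; each statement's English description precedes it below -/
import Mathlib

section
/- For every finite sequence σ of natural numbers there is a finite sequence of commutations transforming σ into a sequence σ' that is in sawtooth form; in particular σ' is a rearrangement of σ, so for every natural number m the number of entries of σ' equal to m equals the number of entries of σ equal to m. -/
/-!
Call a pair of positions `i < j` with `σ_i < σ_j` an ascending pair. If `σ` is not in sawtooth
form, it has adjacent entries `a, b` with `a + 2 ≤ b`; commuting them removes exactly one
ascending pair and leaves all others in place. So swapping such pairs must stop, and it stops
exactly at a sequence in sawtooth form. Commutations only permute entries, which gives the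
multiplicities.
-/

/-- A finite sequence of natural numbers is in sawtooth form if whenever an entry is
less than the next entry, the next entry exceeds it by exactly one. -/
def Sawtooth (l : List ℕ) : Prop :=
  l.Chain' fun a b => a < b → b = a + 1

/-- A single commutation: interchange two adjacent entries `a`, `b` with `|a - b| ≥ 2`. -/
def CommutationStep (l l' : List ℕ) : Prop :=
  ∃ (p q : List ℕ) (a b : ℕ), (a + 2 ≤ b ∨ b + 2 ≤ a) ∧
    l = p ++ a :: b :: q ∧ l' = p ++ b :: a :: q

theorem Relation.exists_reflTransGen_of_measure_lt {α : Type*} {r : α → α → Prop}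
    {P : α → Prop} (f : α → ℕ) (h : ∀ x, ¬ P x → ∃ y, r x y ∧ f y < f x) (x : α) :
    ∃ y, ReflTransGen r x y ∧ P y := by
  induction x using (measure f).wf.induction with
  | h x ih =>
    by_cases hx : P x
    · exact ⟨x, .refl, hx⟩
    · obtain ⟨y, hxy, hy⟩ := h x hx
      obtain ⟨z, hyz, hz⟩ := ih y hy
      exact ⟨z, .head hxy hyz, hz⟩

def ascendingPairs : List ℕ → ℕ
  | [] => 0
  | a :: l => l.countP (a < ·) + ascendingPairs l

theorem ascendingPairs_append_add_of_perm (p : List ℕ) {t t' : List ℕ} (h : t.Perm t') :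
    ascendingPairs (p ++ t) + ascendingPairs t' = ascendingPairs (p ++ t') + ascendingPairs t := by
  induction p with
  | nil => exact Nat.add_comm _ _
  | cons c p ih =>
    have hc : (p ++ t).countP (c < ·) = (p ++ t').countP (c < ·) := by
      simp only [List.countP_append, h.countP_eq]
    simp only [List.cons_append, ascendingPairs]
    omega

theorem ascendingPairs_swap_lt (p q : List ℕ) {a b : ℕ} (h : a < b) :
    ascendingPairs (p ++ b :: a :: q) < ascendingPairs (p ++ a :: b :: q) := by
  have key := ascendingPairs_append_add_of_perm p (List.Perm.swap b a q)
  simp only [ascendingPairs, List.countP_cons, h, Nat.lt_asymm h, decide_true, decide_false,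
    Bool.false_eq_true, if_true, if_false] at key
  omega

theorem CommutationStep.perm {l l' : List ℕ} (h : CommutationStep l l') : l'.Perm l := by
  obtain ⟨p, q, a, b, -, rfl, rfl⟩ := h
  exact (List.Perm.swap a b q).append_left p

theorem perm_of_reflTransGen_commutationStep {l l' : List ℕ}
    (h : Relation.ReflTransGen CommutationStep l l') : l'.Perm l := by
  induction h with
  | refl => rfl
  | tail _ hstep ih => exact hstep.perm.trans ih

theorem exists_append_cons_cons_of_not_sawtooth {l : List ℕ} (h : ¬ Sawtooth l) :
    ∃ p a b q, l = p ++ a :: b :: q ∧ a + 2 ≤ b := by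
  rw [Sawtooth, List.Chain', List.isChain_iff_forall_rel_of_append_cons_cons] at h
  push Not at h
  obtain ⟨a, b, p, q, hl, hab, hne⟩ := h
  exact ⟨p, a, b, q, hl, by omega⟩

theorem exists_commutationStep_of_not_sawtooth {l : List ℕ} (h : ¬ Sawtooth l) :
    ∃ l', CommutationStep l l' ∧ ascendingPairs l' < ascendingPairs l := by
  obtain ⟨p, a, b, q, rfl, hab⟩ := exists_append_cons_cons_of_not_sawtooth h
  exact ⟨p ++ b :: a :: q, ⟨p, q, a, b, .inl hab, rfl, rfl⟩,
    ascendingPairs_swap_lt p q (by omega)⟩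

/-- Every finite sequence of natural numbers can be transformed by a finite sequence of
commutations into a sequence in sawtooth form; the result is a rearrangement of the
original, so every natural number occurs in it with the same multiplicity. -/
theorem exists_sawtooth_of_commutations (σ : List ℕ) :
    ∃ σ' : List ℕ, Relation.ReflTransGen CommutationStep σ σ' ∧ Sawtooth σ' ∧
      ∀ m : ℕ, σ'.count m = σ.count m := by
  obtain ⟨σ', hsteps, hsaw⟩ := Relation.exists_reflTransGen_of_measure_lt ascendingPairs
    (fun _ => exists_commutationStep_of_not_sawtooth) σ
  exact ⟨σ', hsteps, hsaw, (perm_of_reflTransGen_commutationStep hsteps).count_eq⟩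
end

section
/- Suppose σ : {1, …, N} → ℕ is in sawtooth form and its dot graph G(σ) contains an empty, unpierced box whose two defining ascending segments occupy the index intervals [a, a+m] and [b, b+m] (with a+m < b) and both rise from height k to height k+m. Then every index i with a+m < i < b satisfies σ(i) < k or σ(i) > k+m. Consequently, listing in order of index the entries of σ with indices in [a, b+m] and values in {k, …, k+m} yields exactly the sequence k, k+1, …, k+m, k, k+1, …, k+m. -/
/-- `σ : {1, …, N} → ℕ` is in sawtooth form: whenever an entry is less than the next
one, the next one exceeds it by exactly one. -/
def SawtoothOn (N : ℕ) (σ : ℕ → ℕ) : Prop :=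
  ∀ i, 1 ≤ i → i + 1 ≤ N → σ i < σ (i + 1) → σ (i + 1) = σ i + 1

/-- The dots at indices `s, s+1, …, s+r` form a (maximal) ascending segment of the dot
graph `G(σ)`: `σ (s+t) = σ s + t` for `0 ≤ t ≤ r`, and this cannot be extended on
either side. -/
def IsAscSeg (N : ℕ) (σ : ℕ → ℕ) (s r : ℕ) : Prop :=
  1 ≤ s ∧ s + r ≤ N ∧ (∀ t ≤ r, σ (s + t) = σ s + t) ∧
    (1 < s → σ s ≠ σ (s - 1) + 1) ∧ (s + r + 1 ≤ N → σ (s + r + 1) ≠ σ (s + r) + 1)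

/-- The point `(i, y)` lies in the closed parallelogram bounded by the two ascending
segments rising from `(a, k)` to `(a+m, k+m)` and from `(b, k)` to `(b+m, k+m)`,
together with the two horizontal edges joining them. -/
def InBoxRegion (a b k m i y : ℕ) : Prop :=
  k ≤ y ∧ y ≤ k + m ∧ a + (y - k) ≤ i ∧ i ≤ b + (y - k)

/-- The ascending segment at indices `[s, s+r]` crosses the horizontal edge at height
`h` with endpoints at `x`-coordinates `xl < xr`: it has a dot strictly below height `h`
and a dot at or above height `h`, and its slope-one line meets height `h` at an
`x`-coordinate strictly between `xl` and `xr`. -/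
def SegCrossesEdge (σ : ℕ → ℕ) (s r h xl xr : ℕ) : Prop :=
  σ s < h ∧ h ≤ σ (s + r) ∧ xl < s + (h - σ s) ∧ s + (h - σ s) < xr

/-!
A dot `(i, y)` with `a + m < i < b` and `k ≤ y ≤ k + m` lies in the box, since
`a + (y - k) ≤ a + m < i < b ≤ b + (y - k)`; emptiness excludes it. Hence, among the indices
in `[a, b + m]`, those with value in `[k, k + m]` are exactly the two defining segments, each
of which reads `k, k + 1, …, k + m`.
-/

theorem List.range'_eq_append_append_of_lt {a b m : ℕ} (h : a + m < b) :
    List.range' a (b + m + 1 - a) =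
      List.range' a (m + 1) ++ List.range' (a + m + 1) (b - (a + m + 1)) ++
        List.range' b (m + 1) := by
  obtain ⟨g, rfl⟩ : ∃ g, b = a + m + 1 + g := ⟨b - (a + m + 1), by omega⟩
  rw [show a + m + 1 + g + m + 1 - a = m + 1 + g + (m + 1) by omega,
    show a + m + 1 + g - (a + m + 1) = g by omega, ← List.range'_append_1,
    ← List.range'_append_1]
  simp only [Nat.add_assoc]

theorem List.map_range'_of_apply_add {σ : ℕ → ℕ} {s k n : ℕ}
    (h : ∀ t < n, σ (s + t) = k + t) :
    (List.range' s n).map σ = List.range' k n := by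
  rw [List.range'_eq_map_range, List.range'_eq_map_range, List.map_map]
  exact List.map_congr_left fun t ht => h t (List.mem_range.mp ht)

theorem map_filter_range'_of_apply_add {σ : ℕ → ℕ} {s k m : ℕ}
    (h : ∀ t ≤ m, σ (s + t) = k + t) :
    ((List.range' s (m + 1)).filter (fun i => decide (k ≤ σ i ∧ σ i ≤ k + m))).map σ =
      List.range' k (m + 1) := by
  rw [List.filter_eq_self.mpr, List.map_range'_of_apply_add fun t ht => h t (by omega)]
  intro i hi
  rw [List.mem_range'_1] at hi
  obtain ⟨t, ht, rfl⟩ : ∃ t ≤ m, s + t = i := ⟨i - s, by omega, by omega⟩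
  simp only [h t ht, decide_eq_true_eq]
  omega

theorem filter_range'_eq_nil_of_forall_outside {σ : ℕ → ℕ} {s n k m : ℕ}
    (h : ∀ i, s ≤ i → i < s + n → σ i < k ∨ k + m < σ i) :
    (List.range' s n).filter (fun i => decide (k ≤ σ i ∧ σ i ≤ k + m)) = [] := by
  rw [List.filter_eq_nil_iff]
  intro i hi
  rw [List.mem_range'_1] at hi
  have := h i hi.1 hi.2
  simp only [decide_eq_true_eq]
  omega

theorem IsAscSeg.apply_add {N s r : ℕ} {σ : ℕ → ℕ} (h : IsAscSeg N σ s r) {t : ℕ}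
    (ht : t ≤ r) : σ (s + t) = σ s + t :=
  h.2.2.1 t ht

theorem InBoxRegion.of_lt_of_lt {a b k m i y : ℕ} (hai : a + m < i) (hib : i < b)
    (hky : k ≤ y) (hym : y ≤ k + m) : InBoxRegion a b k m i y :=
  ⟨hky, hym, by omega, by omega⟩

theorem box_intersection_pattern_general (N : ℕ) (σ : ℕ → ℕ) (a b k m : ℕ)
    (hab : a + m < b)
    (hleft : IsAscSeg N σ a m) (hright : IsAscSeg N σ b m)
    (hka : σ a = k) (hkb : σ b = k)
    (hempty : ∀ i, 1 ≤ i → i ≤ N → ¬ (a ≤ i ∧ i ≤ a + m) → ¬ (b ≤ i ∧ i ≤ b + m) →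
      ¬ InBoxRegion a b k m i (σ i)) :
    (∀ i, a + m < i → i < b → σ i < k ∨ k + m < σ i) ∧
    ((List.range' a (b + m + 1 - a)).filter
        (fun i => decide (k ≤ σ i ∧ σ i ≤ k + m))).map σ =
      List.range' k (m + 1) ++ List.range' k (m + 1) := by
  have hgap : ∀ i, a + m < i → i < b → σ i < k ∨ k + m < σ i := by
    intro i hai hib
    by_contra! hin
    have ha : 1 ≤ a := hleft.1
    have hbN : b + m ≤ N := hright.2.1
    exact hempty i (by omega) (by omega) (by omega) (by omega)
      (InBoxRegion.of_lt_of_lt hai hib hin.1 hin.2)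
  refine ⟨hgap, ?_⟩
  rw [List.range'_eq_append_append_of_lt hab, List.filter_append, List.filter_append,
    filter_range'_eq_nil_of_forall_outside (s := a + m + 1) fun i h₁ h₂ =>
      hgap i (by omega) (by omega),
    List.append_nil, List.map_append,
    map_filter_range'_of_apply_add fun t ht => hka ▸ hleft.apply_add ht,
    map_filter_range'_of_apply_add fun t ht => hkb ▸ hright.apply_add ht]

/-- If the dot graph of a sawtooth-form sequence `σ` contains an empty, unpierced box
with defining ascending segments at index intervals `[a, a+m]` and `[b, b+m]` (with
`a + m < b`), both rising from height `k` to height `k+m`, then every index strictly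
between `a+m` and `b` carries a value outside `[k, k+m]`, and the entries of `σ` with
index in `[a, b+m]` and value in `[k, k+m]`, read in order of index, are exactly
`k, k+1, …, k+m, k, k+1, …, k+m`. -/
theorem box_intersection_pattern (N : ℕ) (σ : ℕ → ℕ) (a b k m : ℕ)
    (hsaw : SawtoothOn N σ)
    (hm : 1 ≤ m) (hab : a + m < b)
    (hleft : IsAscSeg N σ a m) (hright : IsAscSeg N σ b m)
    (hka : σ a = k) (hkb : σ b = k)
    (hempty : ∀ i, 1 ≤ i → i ≤ N → ¬ (a ≤ i ∧ i ≤ a + m) → ¬ (b ≤ i ∧ i ≤ b + m) →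
      ¬ InBoxRegion a b k m i (σ i))
    (hunpierced : ∀ s r, IsAscSeg N σ s r →
      ¬ SegCrossesEdge σ s r k a b ∧ ¬ SegCrossesEdge σ s r (k + m) (a + m) (b + m)) :
    (∀ i, a + m < i → i < b → σ i < k ∨ k + m < σ i) ∧
    ((List.range' a (b + m + 1 - a)).filter
        (fun i => decide (k ≤ σ i ∧ σ i ≤ k + m))).map σ =
      List.range' k (m + 1) ++ List.range' k (m + 1) :=
  box_intersection_pattern_general N σ a b k m hab hleft hright hka hkb hempty
end

section
/- Suppose σ : {1, …, N} → ℕ is in sawtooth form and its dot graph G(σ) contains an empty, unpierced hexagon of type 1 with leftmost defining segment at indices [a, a+m] rising from height k to k+m, middle defining segment at indices [b, b+l] rising from height k to k+l, and rightmost defining segment at indices [c, c+m−l] rising from height k+l to k+m (with a+m < b, b+l < c, 0 < l < m). Then every index i with a+m < i < b satisfies σ(i) < k or σ(i) > k+m, and every index i with b+l < i < c satisfies σ(i) < k+l. Consequently the dots of σ with indices in [a, c+m−l] and values in {k, …, k+m}, other than entries of value less than k+l lying at indices strictly between b+l and c, read in order: k, k+1, …, k+m, k, k+1, …, k+l, k+l,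 k+l+1, …, k+m. -/
/-- The point `(i, y)` lies in the closed hexagonal region bounded by the leftmost
ascending segment from `(a, k)` to `(a+m, k+m)`, the middle ascending segment from
`(b, k)` to `(b+l, k+l)`, the rightmost ascending segment from `(c, k+l)` to
`(c+m-l, k+m)`, and the three horizontal edges joining `(a, k)` to `(b, k)`,
`(b+l, k+l)` to `(c, k+l)`, and `(a+m, k+m)` to `(c+m-l, k+m)`. -/
def InHexRegion (a b c k l m i y : ℕ) : Prop :=
  (k ≤ y ∧ y ≤ k + l ∧ a + (y - k) ≤ i ∧ i ≤ b + (y - k)) ∨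
  (k + l ≤ y ∧ y ≤ k + m ∧ a + (y - k) ≤ i ∧ i ≤ c + (y - (k + l)))

theorem List.range'_eq_append_range' {s n : ℕ} (t : ℕ) (hst : s ≤ t) (hts : t ≤ s + n) :
    List.range' s n = List.range' s (t - s) ++ List.range' t (s + n - t) := by
  have := List.range'_append_1 (s := s) (m := t - s) (n := s + n - t)
  rwa [Nat.add_sub_cancel' hst, show t - s + (s + n - t) = n by omega, eq_comm] at this

theorem List.map_range'_eq_range' {f : ℕ → ℕ} {s v n : ℕ} (h : ∀ t ≤ n, f (s + t) = v + t) :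
    (List.range' s (n + 1)).map f = List.range' v (n + 1) := by
  rw [List.range'_eq_map_range, List.range'_eq_map_range, List.map_map]
  exact List.map_congr_left fun t ht => h t (Nat.le_of_lt_succ (List.mem_range.1 ht))

theorem SawtoothOn.exists_eq_of_le_of_lt {N : ℕ} {σ : ℕ → ℕ} (hσ : SawtoothOn N σ)
    {j i h : ℕ} (hj : 1 ≤ j) (hji : j ≤ i) (hiN : i ≤ N) (hjh : σ j ≤ h) (hhi : h < σ i) :
    ∃ p, j ≤ p ∧ p < i ∧ σ p = h := by
  induction i, hji using Nat.le_induction with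
  | base => omega
  | succ i hji ih =>
    by_cases hσi : h < σ i
    · obtain ⟨p, hjp, hpi, hp⟩ := ih (by omega) hσi
      exact ⟨p, hjp, by omega, hp⟩
    · have := hσ i (by omega) hiN (by omega)
      exact ⟨i, hji, by omega, by omega⟩

namespace IsAscSeg

variable {N : ℕ} {σ : ℕ → ℕ} {s r : ℕ}

theorem apply_add_s4 (h : IsAscSeg N σ s r) {t : ℕ} (ht : t ≤ r) : σ (s + t) = σ s + t :=
  h.2.2.1 t ht

theorem apply_eq_add_sub (h : IsAscSeg N σ s r) {i : ℕ} (hsi : s ≤ i) (his : i ≤ s + r) :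
    σ i = σ s + (i - s) := by
  simpa only [Nat.add_sub_cancel' hsi] using h.apply_add_s4 (t := i - s) (by omega)

theorem map_filter_range' (h : IsAscSeg N σ s r) {p : ℕ → Bool}
    (hp : ∀ i ∈ List.range' s (r + 1), p i) :
    ((List.range' s (r + 1)).filter p).map σ = List.range' (σ s) (r + 1) := by
  rw [List.filter_eq_self.2 hp]
  exact List.map_range'_eq_range' fun _ => h.apply_add_s4

end IsAscSeg

def IsEmptyHex (N : ℕ) (σ : ℕ → ℕ) (a b c k l m : ℕ) : Prop :=
  ∀ i, 1 ≤ i → i ≤ N → ¬ (a ≤ i ∧ i ≤ a + m) → ¬ (b ≤ i ∧ i ≤ b + l) →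
    ¬ (c ≤ i ∧ i ≤ c + (m - l)) → ¬ InHexRegion a b c k l m i (σ i)

namespace IsEmptyHex

variable {N : ℕ} {σ : ℕ → ℕ} {a b c k l m : ℕ}

theorem not_inHexRegion (h : IsEmptyHex N σ a b c k l m) (ha : 1 ≤ a) (hcN : c + (m - l) ≤ N)
    {i : ℕ} (hai : a + m < i) (hic : i < c) (hib : ¬ (b ≤ i ∧ i ≤ b + l)) :
    ¬ InHexRegion a b c k l m i (σ i) :=
  h i (by omega) (by omega) (by omega) hib (by omega)

theorem apply_lt_or_gt_of_left_gap (h : IsEmptyHex N σ a b c k l m) (ha : 1 ≤ a)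
    (hcN : c + (m - l) ≤ N) (hbc : b < c) {i : ℕ} (hai : a + m < i) (hib : i < b) :
    σ i < k ∨ k + m < σ i := by
  by_contra! hi
  exact h.not_inHexRegion ha hcN hai (by omega) (by omega) (by unfold InHexRegion; omega)

theorem apply_lt_of_right_gap (h : IsEmptyHex N σ a b c k l m) (hσ : SawtoothOn N σ)
    (ha : 1 ≤ a) (hcN : c + (m - l) ≤ N) (hlm : l < m) (hab : a + m < b)
    (hbl : σ (b + l) = k + l) {i : ℕ} (hbi : b + l < i) (hic : i < c) :
    σ i < k + l := by
  by_contra! hi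
  have hgt : k + m < σ i := by
    have := h.not_inHexRegion ha hcN (i := i) (by omega) hic (by omega)
    unfold InHexRegion at this
    omega
  obtain ⟨p, hbp, hpi, hp⟩ :=
    hσ.exists_eq_of_le_of_lt (by omega) hbi.le (by omega) (by omega) hgt
  have hp_ne : p ≠ b + l := by
    rintro rfl
    omega
  exact h.not_inHexRegion ha hcN (i := p) (by omega) (by omega) (by omega)
    (by unfold InHexRegion; omega)

end IsEmptyHex

theorem range'_hexagon_span_eq_append {a b c l m : ℕ} (hab : a + m < b) (hbc : b + l < c) :
    List.range' a (c + (m - l) + 1 - a) =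
      List.range' a (m + 1) ++ List.range' (a + m + 1) (b - (a + m + 1)) ++
        List.range' b (l + 1) ++ List.range' (b + l + 1) (c - (b + l + 1)) ++
          List.range' c (m - l + 1) := by
  rw [List.range'_eq_append_range' c (by omega) (by omega),
    List.range'_eq_append_range' (s := a) (b + l + 1) (by omega) (by omega),
    List.range'_eq_append_range' (s := a) b (by omega) (by omega),
    List.range'_eq_append_range' (s := a) (a + m + 1) (by omega) (by omega)]
  congr 5 <;> omega

theorem hexagon_intersection_pattern_general (N : ℕ) (σ : ℕ → ℕ) (a b c k l m : ℕ)
    (hsaw : SawtoothOn N σ)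
    (hlm : l < m) (hab : a + m < b) (hbc : b + l < c)
    (hleft : IsAscSeg N σ a m) (hmid : IsAscSeg N σ b l)
    (hright : IsAscSeg N σ c (m - l))
    (hka : σ a = k) (hkb : σ b = k) (hkc : σ c = k + l)
    (hempty : ∀ i, 1 ≤ i → i ≤ N → ¬ (a ≤ i ∧ i ≤ a + m) → ¬ (b ≤ i ∧ i ≤ b + l) →
      ¬ (c ≤ i ∧ i ≤ c + (m - l)) → ¬ InHexRegion a b c k l m i (σ i)) :
    (∀ i, a + m < i → i < b → σ i < k ∨ k + m < σ i) ∧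
    (∀ i, b + l < i → i < c → σ i < k + l) ∧
    ((List.range' a (c + (m - l) + 1 - a)).filter
        (fun i => decide ((k ≤ σ i ∧ σ i ≤ k + m) ∧
          ¬ (b + l < i ∧ i < c ∧ σ i < k + l)))).map σ =
      List.range' k (m + 1) ++ List.range' k (l + 1) ++
        List.range' (k + l) (m - l + 1) := by
  have hempty : IsEmptyHex N σ a b c k l m := hempty
  have hbl : σ (b + l) = k + l := by rw [hmid.apply_add_s4 le_rfl, hkb]
  have hgap₁ : ∀ i, a + m < i → i < b → σ i < k ∨ k + m < σ i := fun _ =>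
    hempty.apply_lt_or_gt_of_left_gap hleft.1 hright.2.1 (by omega)
  have hgap₂ : ∀ i, b + l < i → i < c → σ i < k + l := fun _ =>
    hempty.apply_lt_of_right_gap hsaw hleft.1 hright.2.1 hlm hab hbl
  refine ⟨hgap₁, hgap₂, ?_⟩
  simp only [range'_hexagon_span_eq_append hab hbc, List.filter_append, List.map_append]
  rw [hleft.map_filter_range', List.filter_eq_nil_iff.2, hmid.map_filter_range',
    List.filter_eq_nil_iff.2, hright.map_filter_range', hka, hkb, hkc]
  · simp only [List.map_nil, List.append_nil]
  all_goals
    intro i hi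
    rw [List.mem_range'_1] at hi
    simp only [decide_eq_true_eq]
  · have := hright.apply_eq_add_sub (i := i) (by omega) (by omega)
    omega
  · have := hgap₂ i (by omega) (by omega)
    omega
  · have := hmid.apply_eq_add_sub (i := i) (by omega) (by omega)
    omega
  · have := hgap₁ i (by omega) (by omega)
    omega
  · have := hleft.apply_eq_add_sub (i := i) (by omega) (by omega)
    omega

/-- If the dot graph of a sawtooth-form sequence `σ` contains an empty, unpierced
hexagon of type 1, with leftmost defining segment at indices `[a, a+m]` rising from
height `k` to `k+m`, middle defining segment at indices `[b, b+l]` rising from `k` to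
`k+l`, and rightmost defining segment at indices `[c, c+m-l]` rising from `k+l` to
`k+m` (where `a+m < b`, `b+l < c`, `0 < l < m`), then every index strictly between
`a+m` and `b` carries a value outside `[k, k+m]`, every index strictly between `b+l`
and `c` carries a value below `k+l`, and the entries of `σ` with index in `[a, c+m-l]`
and value in `[k, k+m]`, other than those of value below `k+l` at indices strictly
between `b+l` and `c`, read in order of index, are exactly
`k, …, k+m, k, …, k+l, k+l, …, k+m`. -/
theorem hexagon_intersection_pattern (N : ℕ) (σ : ℕ → ℕ) (a b c k l m : ℕ)
    (hsaw : SawtoothOn N σ)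
    (hl : 0 < l) (hlm : l < m) (hab : a + m < b) (hbc : b + l < c)
    (hleft : IsAscSeg N σ a m) (hmid : IsAscSeg N σ b l)
    (hright : IsAscSeg N σ c (m - l))
    (hka : σ a = k) (hkb : σ b = k) (hkc : σ c = k + l)
    (hempty : ∀ i, 1 ≤ i → i ≤ N → ¬ (a ≤ i ∧ i ≤ a + m) → ¬ (b ≤ i ∧ i ≤ b + l) →
      ¬ (c ≤ i ∧ i ≤ c + (m - l)) → ¬ InHexRegion a b c k l m i (σ i))
    (hunpierced : ∀ s r, IsAscSeg N σ s r →
      ¬ SegCrossesEdge σ s r k a b ∧ ¬ SegCrossesEdge σ s r (k + l) (b + l) c ∧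
      ¬ SegCrossesEdge σ s r (k + m) (a + m) (c + (m - l))) :
    (∀ i, a + m < i → i < b → σ i < k ∨ k + m < σ i) ∧
    (∀ i, b + l < i → i < c → σ i < k + l) ∧
    ((List.range' a (c + (m - l) + 1 - a)).filter
        (fun i => decide ((k ≤ σ i ∧ σ i ≤ k + m) ∧
          ¬ (b + l < i ∧ i < c ∧ σ i < k + l)))).map σ =
      List.range' k (m + 1) ++ List.range' k (l + 1) ++
        List.range' (k + l) (m - l + 1) :=
  hexagon_intersection_pattern_general N σ a b c k l m hsaw hlm hab hbc hleft hmid hright hka hkb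
    hkc hempty
end
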